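/- arXiv:2005.06202 — 3 statements merged into one kernel-verified Lean document; each statement's English description precedes it below -/
import Mathlib

section
/- Let (G, w) be a weighted graph on n vertices, where w assigns a nonzero field element to each edge, and let A(G,w) be its adjacency matrix (with entry w(uv) in positions (u,v) and (v,u) for each edge uv, and 0 elsewhere). Then the characteristic polynomial φ(G,w;λ) = det(λI − A(G,w)) = Σ_{k=0}^{n} a_{n−k} λ^k has coefficients a_{n−k} = Σ_{B ∈ B_k(G)} (−1)^{κ(B)} 2^{c(B)} w(B) w(B₂), where B_k(G) is the set of elementary subgraphs of G of order k, κ(B) is the number of connected components of B, c(B) is the number of cycles in B, B₂ is the set of isolated edges of B, and w(B) = Π_{e ∈ E(B)} w(e). -/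
open SimpleGraph

/-- The degree of a vertex in a subgraph. -/
noncomputable def subDeg {V : Type*} {G : SimpleGraph V} (B : G.Subgraph) (v : V) : ℕ :=
  (B.neighborSet v).ncard

/-- An elementary subgraph: every vertex has degree `1` or `2` and adjacent vertices have
equal degrees; equivalently, every connected component is a single edge or a cycle. -/
def IsElementarySubgraph {V : Type*} {G : SimpleGraph V} (B : G.Subgraph) : Prop :=
  (∀ v ∈ B.verts, subDeg B v = 1 ∨ subDeg B v = 2) ∧
    ∀ u v, B.Adj u v → subDeg B u = subDeg B v

/-- `κ(B)`: the number of connected components of a subgraph. -/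
noncomputable def numComponents {V : Type*} {G : SimpleGraph V} (B : G.Subgraph) : ℕ :=
  Nat.card B.coe.ConnectedComponent

/-- `c(B)`: the number of connected components of a subgraph that are cycles, i.e. in
which every vertex has degree `2`. -/
noncomputable def numCycles {V : Type*} {G : SimpleGraph V} (B : G.Subgraph) : ℕ :=
  Nat.card {C : B.coe.ConnectedComponent |
    ∀ v : B.verts, B.coe.connectedComponentMk v = C → subDeg B ↑v = 2}

/-- `w(B)`: the product of the weights of the edges of a subgraph. -/
noncomputable def subgraphWeight {V : Type*} {F : Type*} [Field F] {G : SimpleGraph V}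
    (w : Sym2 V → F) (B : G.Subgraph) : F :=
  ∏ᶠ e ∈ B.edgeSet, w e

/-- `w(B₂)`: the product of the weights of the isolated edges of a subgraph (the edges
both of whose endpoints have degree `1`). -/
noncomputable def isolatedEdgesWeight {V : Type*} {F : Type*} [Field F]
    {G : SimpleGraph V} (w : Sym2 V → F) (B : G.Subgraph) : F :=
  ∏ᶠ e ∈ {e ∈ B.edgeSet | ∀ x ∈ e, subDeg B x = 1}, w e

/-!
Expand `det (λ - A)` over permutations. As `A` has zero diagonal, the coefficient of `λ ^ k`
collects the permutations `σ` moving exactly `n - k` points, and the term of `σ` vanishes unless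
every moved point `v` is adjacent to `σ v`. The edges `{v, σ v}` of such a `σ` form an elementary
subgraph `B` whose components are the supports of the cycles of `σ` (a transposition giving an
isolated edge), so `sign σ = (-1) ^ (n - k + κ(B))`, while the entries multiply to
`(-1) ^ (n - k) w(B) w(B₂)` because the edge of a transposition is used twice. Conversely, the
permutations giving `B` are obtained by choosing one of the two orientations of every cycle of `B`,
so there are `2 ^ c(B)` of them; existence is by peeling off an isolated edge or a cycle.
-/

open Equiv Equiv.Perm Finset

namespace Matrix

variable {n R : Type*} [Fintype n] [DecidableEq n] [CommRing R]

theorem charpoly_coeff_eq_sum_perm_of_diag_eq_zero (A : Matrix n n R) (hA : ∀ i, A i i = 0)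
    {k : ℕ} (hk : k ≤ Fintype.card n) :
    A.charpoly.coeff k = ∑ σ : Perm n with #σ.support = Fintype.card n - k,
      ((sign σ : ℤ) : R) * ∏ i ∈ σ.support, -A (σ i) i := by
  rw [charpoly, det_apply, Polynomial.finsetSum_coeff, Finset.sum_filter]
  refine Finset.sum_congr rfl fun σ _ => ?_
  have hprod : ∏ i, A.charmatrix (σ i) i =
      Polynomial.C (∏ i ∈ σ.support, -A (σ i) i) * Polynomial.X ^ #σ.supportᶜ := by
    rw [← Finset.prod_mul_prod_compl σ.support, map_prod, ← Finset.prod_const]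
    congr 1 <;> refine Finset.prod_congr rfl fun i hi => ?_
    · rw [charmatrix_apply_ne _ _ _ (mem_support.mp hi), map_neg]
    · rw [notMem_support.mp (Finset.mem_compl.mp hi), charmatrix_apply_eq, hA, map_zero,
        sub_zero]
  have hcard : k = #σ.supportᶜ ↔ #σ.support = Fintype.card n - k := by
    have := σ.support.card_le_univ
    rw [card_compl]
    omega
  rw [hprod, Polynomial.coeff_smul, Polynomial.coeff_C_mul_X_pow, Units.smul_def, zsmul_eq_mul]
  simp only [hcard, mul_ite, mul_zero]

end Matrix

namespace Equiv.Perm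

variable {α : Type*}

theorem apply_eq_inv_apply_iff (σ : Perm α) (x : α) :
    σ x = σ⁻¹ x ↔ σ (σ x) = x := by
  rw [eq_inv_iff_eq]

variable [DecidableEq α]

theorem ncard_pair_apply_inv_apply (σ : Perm α) (x : α) :
    ({σ x, σ⁻¹ x} : Set α).ncard = if σ (σ x) = x then 1 else 2 := by
  split_ifs with h
  · rw [← apply_eq_inv_apply_iff] at h
    rw [h, Set.pair_eq_singleton, Set.ncard_singleton]
  · rw [← apply_eq_inv_apply_iff] at h
    exact Set.ncard_pair h

variable [Fintype α]

theorem sign_eq_neg_one_pow_card_support_add_card_cycleFactorsFinset (σ : Perm α) :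
    sign σ = (-1) ^ (#σ.support + #σ.cycleFactorsFinset) := by
  rw [sign_of_cycleType, sum_cycleType, cycleType_def, Multiset.card_map, Finset.card_val]

theorem apply_apply_eq_self_iff_card_support_cycleOf {σ : Perm α} {x : α} (hx : σ x ≠ x) :
    σ (σ x) = x ↔ #(σ.cycleOf x).support = 2 := by
  have hcyc := σ.isCycle_cycleOf hx
  have hσx : σ.cycleOf x (σ.cycleOf x x) = σ (σ x) := by
    rw [cycleOf_apply_self, cycleOf_apply_apply_self]
  constructor
  · intro h
    rw [hcyc.eq_swap_of_apply_apply_eq_self (by rwa [cycleOf_apply_self]) (by rwa [hσx]),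
      card_support_swap]
    rwa [cycleOf_apply_self, ne_comm]
  · intro h
    obtain ⟨a, b, hab, hswap⟩ := card_support_eq_two.mp h
    rw [← hσx, hswap, swap_apply_self]

theorem two_lt_card_support_cycleOf_iff {σ : Perm α} {x : α} (hx : σ x ≠ x) :
    2 < #(σ.cycleOf x).support ↔ σ (σ x) ≠ x := by
  have := two_le_card_support_cycleOf_iff.mpr hx
  rw [ne_eq, apply_apply_eq_self_iff_card_support_cycleOf hx]
  omega

theorem cycleOf_inv_apply_self (σ : Perm α) (x : α) : σ.cycleOf (σ⁻¹ x) = σ.cycleOf x := by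
  simpa using σ.cycleOf_self_apply_zpow (-1) x

def reverseCycles (σ : Perm α) (s : Finset (Perm α)) : Perm α where
  toFun x := if σ.cycleOf x ∈ s then σ⁻¹ x else σ x
  invFun x := if σ.cycleOf x ∈ s then σ x else σ⁻¹ x
  left_inv x := by
    by_cases h : σ.cycleOf x ∈ s
    · simp only [h, if_true, cycleOf_inv_apply_self]
      exact σ.apply_symm_apply x
    · simp only [h, if_false, cycleOf_self_apply]
      exact σ.symm_apply_apply x
  right_inv x := by
    by_cases h : σ.cycleOf x ∈ s
    · simp only [h, if_true, cycleOf_self_apply]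
      exact σ.symm_apply_apply x
    · simp only [h, if_false, cycleOf_inv_apply_self]
      exact σ.apply_symm_apply x

variable {σ : Perm α} {s : Finset (Perm α)} {x : α}

theorem reverseCycles_apply_of_mem (h : σ.cycleOf x ∈ s) : σ.reverseCycles s x = σ⁻¹ x :=
  if_pos h

theorem reverseCycles_apply_of_notMem (h : σ.cycleOf x ∉ s) : σ.reverseCycles s x = σ x :=
  if_neg h

theorem reverseCycles_apply_eq_self (h : σ x = x) : σ.reverseCycles s x = x := by
  by_cases hs : σ.cycleOf x ∈ s
  · rw [reverseCycles_apply_of_mem hs, inv_eq_iff_eq, h]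
  · rw [reverseCycles_apply_of_notMem hs, h]

theorem reverseCycles_injOn :
    Set.InjOn σ.reverseCycles {c ∈ σ.cycleFactorsFinset | 2 < #c.support}.powerset := by
  suffices h : ∀ s t : Finset (Perm α), s ⊆ {c ∈ σ.cycleFactorsFinset | 2 < #c.support} →
      σ.reverseCycles s = σ.reverseCycles t → s ⊆ t by
    intro s hs t ht hst
    exact (h s t (mem_powerset.mp hs) hst).antisymm (h t s (mem_powerset.mp ht) hst.symm)
  intro s t hs hst c hc
  obtain ⟨hcσ, hlong⟩ := Finset.mem_filter.mp (hs hc)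
  obtain ⟨x, hx⟩ := (mem_cycleFactorsFinset_iff.mp hcσ).1.nonempty_support
  have hxσ := mem_cycleFactorsFinset_support_le hcσ hx
  rw [cycle_is_cycleOf hx hcσ] at hc hlong ⊢
  by_contra hct
  have := DFunLike.congr_fun hst x
  rw [reverseCycles_apply_of_mem hc, reverseCycles_apply_of_notMem hct] at this
  rw [two_lt_card_support_cycleOf_iff (Perm.mem_support.mp hxσ), ne_eq,
    ← apply_eq_inv_apply_iff] at hlong
  exact hlong this.symm

end Equiv.Perm

namespace SimpleGraph

variable {V : Type*} {G : SimpleGraph V}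

/-- On a cycle component of `B` the last condition forbids `σ` to step back, so there `σ` is one
of the two rotations of the cycle. -/
structure Subgraph.IsTraversal (B : G.Subgraph) (σ : Perm V) : Prop where
  apply_eq_self_of_notMem : ∀ v ∉ B.verts, σ v = v
  adj_apply : ∀ v ∈ B.verts, Subgraph.Adj B v (σ v)
  apply_apply_ne : ∀ v ∈ B.verts, subDeg B v = 2 → σ (σ v) ≠ v

theorem Subgraph.neighborSet_eq_pair [Finite V] {B : G.Subgraph} {v a b : V}
    (hv : subDeg B v = 1 ∨ subDeg B v = 2) (ha : B.Adj v a) (hb : B.Adj v b)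
    (hab : subDeg B v = 2 → a ≠ b) : B.neighborSet v = {a, b} := by
  have hsub : ({a, b} : Set V) ⊆ B.neighborSet v := by
    rintro x (rfl | rfl)
    exacts [ha, hb]
  refine (Set.eq_of_subset_of_ncard_le hsub ?_ (Set.toFinite _)).symm
  rcases hv with hv | hv
  · rw [← subDeg, hv]
    exact (Set.ncard_pos (Set.toFinite _)).mpr ⟨a, Or.inl rfl⟩
  · rw [← subDeg, hv, Set.ncard_pair (hab hv)]

namespace Subgraph.IsTraversal

variable {B : G.Subgraph} {σ τ : Perm V} {u v : V}

theorem mem_verts_iff (h : B.IsTraversal σ) : v ∈ B.verts ↔ σ v ≠ v :=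
  ⟨fun hv => (h.adj_apply v hv).ne.symm, not_imp_comm.mp (h.apply_eq_self_of_notMem v)⟩

theorem apply_mem_verts (h : B.IsTraversal σ) (hv : v ∈ B.verts) : σ v ∈ B.verts :=
  B.edge_vert (h.adj_apply v hv).symm

theorem pow_apply_mem_verts (h : B.IsTraversal σ) (hv : v ∈ B.verts) (n : ℕ) :
    (σ ^ n) v ∈ B.verts := by
  induction n with
  | zero => exact hv
  | succ n ih =>
    rw [pow_succ', Perm.mul_apply]
    exact h.apply_mem_verts ih

theorem inv (h : B.IsTraversal σ) : B.IsTraversal σ⁻¹ where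
  apply_eq_self_of_notMem v hv := inv_eq_iff_eq.mpr (h.apply_eq_self_of_notMem v hv).symm
  adj_apply v hv := by
    have hv' : σ⁻¹ v ∈ B.verts := by
      rw [h.mem_verts_iff] at hv ⊢
      simpa [eq_comm, eq_symm_apply] using hv
    simpa only [Perm.coe_inv, apply_symm_apply] using (h.adj_apply _ hv').symm
  apply_apply_ne v hv hd := by
    simpa [eq_comm, eq_symm_apply, symm_apply_eq] using h.apply_apply_ne v hv hd

variable [Finite V]

theorem neighborSet_eq (hB : IsElementarySubgraph B) (h : B.IsTraversal σ) (hv : v ∈ B.verts) :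
    B.neighborSet v = {σ v, σ⁻¹ v} :=
  neighborSet_eq_pair (hB.1 v hv) (h.adj_apply v hv) (h.inv.adj_apply v hv)
    fun hd => (σ.apply_eq_inv_apply_iff v).not.mpr (h.apply_apply_ne v hv hd)

theorem sameCycle_of_adj (hB : IsElementarySubgraph B) (hσ : B.IsTraversal σ) {u v : V}
    (huv : B.Adj u v) : σ.SameCycle u v := by
  have hv : v ∈ B.neighborSet u := huv
  rw [hσ.neighborSet_eq hB (B.edge_vert huv)] at hv
  rcases hv with rfl | rfl
  exacts [⟨1, rfl⟩, ⟨-1, rfl⟩]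

theorem reachable_iff_sameCycle (hB : IsElementarySubgraph B) (hσ : B.IsTraversal σ)
    {u v : B.verts} : B.coe.Reachable u v ↔ σ.SameCycle u v := by
  constructor
  · intro h
    replace h := (reachable_iff_reflTransGen u v).mp h
    induction h with
    | refl => exact .refl _ _
    | tail _ hadj ih => exact ih.trans (hσ.sameCycle_of_adj hB hadj)
  · intro h
    obtain ⟨n, hn⟩ := h.exists_nat_pow_eq
    clear h
    induction n generalizing v with
    | zero => rw [Subtype.ext hn]
    | succ n ih =>
      have hadj : B.Adj ((σ ^ n) u) v := by
        rw [← hn, pow_succ', Perm.mul_apply]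
        exact hσ.adj_apply _ (hσ.pow_apply_mem_verts u.2 n)
      exact (ih (v := ⟨_, hσ.pow_apply_mem_verts u.2 n⟩) rfl).trans hadj.coe.reachable

variable [DecidableEq V]

theorem subDeg_eq (hB : IsElementarySubgraph B) (h : B.IsTraversal σ) (hv : v ∈ B.verts) :
    subDeg B v = if σ (σ v) = v then 1 else 2 := by
  rw [subDeg, h.neighborSet_eq hB hv, σ.ncard_pair_apply_inv_apply]

theorem apply_apply_eq_of_apply_eq (hB : IsElementarySubgraph B) (hσ : B.IsTraversal σ)
    (hτ : B.IsTraversal τ) (hv : v ∈ B.verts) (h : τ v = σ v) : τ (σ v) = σ (σ v) := by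
  have hy := hσ.apply_mem_verts hv
  have hτy : τ (σ v) ∈ B.neighborSet (σ v) := hτ.adj_apply _ hy
  rw [hσ.neighborSet_eq hB hy] at hτy
  simp only [Perm.coe_inv, symm_apply_apply, Set.mem_insert_iff, Set.mem_singleton_iff] at hτy
  rcases hτy with hτy | hτy
  · exact hτy
  · by_contra hne
    refine hτ.apply_apply_ne _ hy ?_ (by rw [hτy, h])
    rw [hσ.subDeg_eq hB hy, if_neg (fun he => hne (by rw [hτy, σ.injective he]))]

theorem apply_eq_of_sameCycle (hB : IsElementarySubgraph B) (hσ : B.IsTraversal σ)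
    (hτ : B.IsTraversal τ) (hv : v ∈ B.verts) (h : τ v = σ v) (hvu : σ.SameCycle v u) :
    τ u = σ u := by
  obtain ⟨n, rfl⟩ := hvu.exists_nat_pow_eq
  clear hvu
  induction n with
  | zero => exact h
  | succ n ih =>
    rw [pow_succ', Perm.mul_apply]
    exact apply_apply_eq_of_apply_eq hB hσ hτ (hσ.pow_apply_mem_verts hv n) ih

end Subgraph.IsTraversal

section PermSubgraph

variable {σ : Perm V} {u v : V}

def permSubgraph (G : SimpleGraph V) (σ : Perm V) : G.Subgraph where
  verts := {v | σ v ≠ v}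
  Adj u v := G.Adj u v ∧ (σ u = v ∨ σ v = u)
  adj_sub h := h.1
  edge_vert {u v} h := by
    rcases h with ⟨huv, rfl | rfl⟩
    · exact huv.ne'
    · exact fun hu => huv.ne (σ.injective hu)
  symm := ⟨fun _ _ h => ⟨h.1.symm, h.2.symm⟩⟩

theorem ncard_permSubgraph_verts [Fintype V] [DecidableEq V] :
    (G.permSubgraph σ).verts.ncard = #σ.support := by
  rw [← Set.ncard_coe_finset, Perm.coe_support_eq_set_support]
  rfl

theorem permSubgraph_adj : (G.permSubgraph σ).Adj u v ↔ G.Adj u v ∧ (σ u = v ∨ σ v = u) :=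
  Iff.rfl

def MovesAlongEdges (G : SimpleGraph V) (σ : Perm V) : Prop :=
  ∀ v, σ v ≠ v → G.Adj v (σ v)

instance [Fintype V] [DecidableEq V] [DecidableRel G.Adj] : DecidablePred G.MovesAlongEdges :=
  fun σ => inferInstanceAs (Decidable (∀ v, σ v ≠ v → G.Adj v (σ v)))

namespace MovesAlongEdges

theorem neighborSet_permSubgraph (h : G.MovesAlongEdges σ) (hv : σ v ≠ v) :
    (G.permSubgraph σ).neighborSet v = {σ v, σ⁻¹ v} := by
  ext u
  simp only [Subgraph.mem_neighborSet, permSubgraph_adj, Set.mem_insert_iff,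
    Set.mem_singleton_iff, eq_inv_iff_eq]
  constructor
  · rintro ⟨-, h' | h'⟩
    exacts [Or.inl h'.symm, Or.inr h']
  · rintro (rfl | rfl)
    · exact ⟨h v hv, Or.inl rfl⟩
    · exact ⟨(h u fun hu => hv (by rw [hu, hu])).symm, Or.inr rfl⟩

variable [DecidableEq V]

theorem subDeg_permSubgraph (h : G.MovesAlongEdges σ) (hv : σ v ≠ v) :
    subDeg (G.permSubgraph σ) v = if σ (σ v) = v then 1 else 2 := by
  rw [subDeg, h.neighborSet_permSubgraph hv, σ.ncard_pair_apply_inv_apply]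

theorem isTraversal (h : G.MovesAlongEdges σ) : (G.permSubgraph σ).IsTraversal σ where
  apply_eq_self_of_notMem v hv := not_not.mp hv
  adj_apply v hv := permSubgraph_adj.mpr ⟨h v hv, Or.inl rfl⟩
  apply_apply_ne v hv hd h2 := by
    rw [h.subDeg_permSubgraph hv, if_pos h2] at hd
    omega

theorem isElementarySubgraph (h : G.MovesAlongEdges σ) :
    IsElementarySubgraph (G.permSubgraph σ) := by
  refine ⟨fun v hv => ?_, fun u v huv => ?_⟩
  · rw [h.subDeg_permSubgraph hv]
    split_ifs <;> simp
  · have hu := (G.permSubgraph σ).edge_vert huv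
    have hv := (G.permSubgraph σ).edge_vert huv.symm
    rw [h.subDeg_permSubgraph hu, h.subDeg_permSubgraph hv]
    rcases huv.2 with rfl | rfl
    · simp only [σ.injective.eq_iff]
    · simp only [σ.injective.eq_iff]

end MovesAlongEdges

namespace Subgraph.IsTraversal

variable {B : G.Subgraph}

theorem movesAlongEdges (hσ : B.IsTraversal σ) : G.MovesAlongEdges σ :=
  fun v hv => B.adj_sub (hσ.adj_apply v (hσ.mem_verts_iff.mpr hv))

variable [Finite V]

theorem permSubgraph_eq (hB : IsElementarySubgraph B) (hσ : B.IsTraversal σ) :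
    G.permSubgraph σ = B := by
  refine Subgraph.ext (Set.ext fun v => hσ.mem_verts_iff.symm) ?_
  ext u v
  rw [permSubgraph_adj]
  constructor
  · rintro ⟨huv, rfl | rfl⟩
    · exact hσ.adj_apply u (hσ.mem_verts_iff.mpr huv.ne')
    · exact (hσ.adj_apply v (hσ.mem_verts_iff.mpr huv.ne)).symm
  · intro huv
    have hv : v ∈ B.neighborSet u := huv
    rw [hσ.neighborSet_eq hB (B.edge_vert huv)] at hv
    refine ⟨B.adj_sub huv, ?_⟩
    rcases hv with rfl | rfl
    · exact Or.inl rfl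
    · exact Or.inr (σ.apply_symm_apply u)

end Subgraph.IsTraversal

theorem isTraversal_iff_movesAlongEdges_and_permSubgraph_eq [Finite V] [DecidableEq V]
    {B : G.Subgraph} (hB : IsElementarySubgraph B) :
    B.IsTraversal σ ↔ G.MovesAlongEdges σ ∧ G.permSubgraph σ = B :=
  ⟨fun h => ⟨h.movesAlongEdges, h.permSubgraph_eq hB⟩, fun ⟨h, hB⟩ => hB ▸ h.isTraversal⟩

end PermSubgraph

namespace Subgraph.IsTraversal

variable [Fintype V] [DecidableEq V] {B : G.Subgraph} {σ τ : Perm V} {v : V}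

theorem subDeg_eq_two_iff (hB : IsElementarySubgraph B) (hσ : B.IsTraversal σ)
    (hv : v ∈ B.verts) : subDeg B v = 2 ↔ 2 < #(σ.cycleOf v).support := by
  rw [hσ.subDeg_eq hB hv, two_lt_card_support_cycleOf_iff (hσ.mem_verts_iff.mp hv)]
  split_ifs with h <;> simp [h]

noncomputable def connectedComponentEquivCycleFactors (hB : IsElementarySubgraph B)
    (hσ : B.IsTraversal σ) : B.coe.ConnectedComponent ≃ σ.cycleFactorsFinset :=
  have mem_support (v : B.verts) : (v : V) ∈ σ.support :=
    Perm.mem_support.mpr (hσ.mem_verts_iff.mp v.2)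
  Equiv.ofBijective
    (ConnectedComponent.lift
      (fun v => ⟨σ.cycleOf v, cycleOf_mem_cycleFactorsFinset_iff.mpr (mem_support v)⟩)
      fun u v p _ => Subtype.ext ((hσ.reachable_iff_sameCycle hB).mp p.reachable).cycleOf_eq)
    ⟨by
      refine ConnectedComponent.ind₂ fun u v h => ConnectedComponent.sound ?_
      rw [hσ.reachable_iff_sameCycle hB, sameCycle_iff_cycleOf_eq_of_mem_support
        (mem_support u) (mem_support v)]
      exact congrArg Subtype.val h,
    by
      rintro ⟨c, hc⟩
      obtain ⟨v, hv⟩ := (mem_cycleFactorsFinset_iff.mp hc).1.nonempty_support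
      have hvB : v ∈ B.verts :=
        hσ.mem_verts_iff.mpr (Perm.mem_support.mp (mem_cycleFactorsFinset_support_le hc hv))
      exact ⟨B.coe.connectedComponentMk ⟨v, hvB⟩, Subtype.ext (cycle_is_cycleOf hv hc).symm⟩⟩

theorem connectedComponentEquivCycleFactors_mk (hB : IsElementarySubgraph B)
    (hσ : B.IsTraversal σ) (v : B.verts) :
    (hσ.connectedComponentEquivCycleFactors hB (B.coe.connectedComponentMk v) : Perm V) =
      σ.cycleOf v :=
  rfl

theorem numComponents_eq (hB : IsElementarySubgraph B) (hσ : B.IsTraversal σ) :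
    numComponents B = #σ.cycleFactorsFinset := by
  rw [numComponents, Nat.card_congr (hσ.connectedComponentEquivCycleFactors hB),
    Nat.card_eq_fintype_card, Fintype.card_coe]

theorem numCycles_eq (hB : IsElementarySubgraph B) (hσ : B.IsTraversal σ) :
    numCycles B = #{c ∈ σ.cycleFactorsFinset | 2 < #c.support} := by
  let e := hσ.connectedComponentEquivCycleFactors hB
  have he (C : B.coe.ConnectedComponent) :
      (∀ v : B.verts, B.coe.connectedComponentMk v = C → subDeg B v = 2) ↔
        2 < #(e C : Perm V).support := by
    induction C using ConnectedComponent.ind with | h u => ?_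
    simp only [e, connectedComponentEquivCycleFactors_mk]
    refine ⟨fun h => (hσ.subDeg_eq_two_iff hB u.2).mp (h u rfl), fun h v hv => ?_⟩
    rw [hσ.subDeg_eq_two_iff hB v.2, ← connectedComponentEquivCycleFactors_mk hB hσ v, hv]
    exact h
  let e' : {C | ∀ v : B.verts, B.coe.connectedComponentMk v = C → subDeg B v = 2} ≃
      {c : σ.cycleFactorsFinset // 2 < #(c : Perm V).support} := e.subtypeEquiv he
  rw [numCycles, Nat.card_congr e', ← Nat.card_eq_finsetCard]
  exact Nat.card_congr ((Equiv.subtypeSubtypeEquivSubtypeInter (· ∈ σ.cycleFactorsFinset)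
    fun c => 2 < #c.support).trans (Equiv.subtypeEquivRight fun _ => by rw [Finset.mem_filter]))

theorem reverseCycles (hσ : B.IsTraversal σ) (s : Finset (Perm V)) :
    B.IsTraversal (σ.reverseCycles s) where
  apply_eq_self_of_notMem v hv := by
    by_cases h : σ.cycleOf v ∈ s
    · rw [reverseCycles_apply_of_mem h, hσ.inv.apply_eq_self_of_notMem v hv]
    · rw [reverseCycles_apply_of_notMem h, hσ.apply_eq_self_of_notMem v hv]
  adj_apply v hv := by
    by_cases h : σ.cycleOf v ∈ s
    · rw [reverseCycles_apply_of_mem h]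
      exact hσ.inv.adj_apply v hv
    · rw [reverseCycles_apply_of_notMem h]
      exact hσ.adj_apply v hv
  apply_apply_ne v hv hd := by
    by_cases h : σ.cycleOf v ∈ s
    · rw [reverseCycles_apply_of_mem h,
        reverseCycles_apply_of_mem ((σ.cycleOf_inv_apply_self v).symm ▸ h)]
      exact hσ.inv.apply_apply_ne v hv hd
    · rw [reverseCycles_apply_of_notMem h,
        reverseCycles_apply_of_notMem ((σ.cycleOf_self_apply v).symm ▸ h)]
      exact hσ.apply_apply_ne v hv hd

theorem eq_reverseCycles (hB : IsElementarySubgraph B) (hσ : B.IsTraversal σ)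
    (hτ : B.IsTraversal τ) :
    τ = σ.reverseCycles {c ∈ σ.cycleFactorsFinset | 2 < #c.support ∧
      ∃ v ∈ c.support, τ v ≠ σ v} := by
  ext v
  by_cases hv : v ∈ B.verts
  swap
  · rw [hτ.apply_eq_self_of_notMem v hv,
      reverseCycles_apply_eq_self (hσ.apply_eq_self_of_notMem v hv)]
  have hmoved := hσ.mem_verts_iff.mp hv
  by_cases hmem : σ.cycleOf v ∈ {c ∈ σ.cycleFactorsFinset | 2 < #c.support ∧
      ∃ v ∈ c.support, τ v ≠ σ v}
  · rw [reverseCycles_apply_of_mem hmem]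
    obtain ⟨-, -, u, hu, hτu⟩ := Finset.mem_filter.mp hmem
    have hτv : τ v ∈ B.neighborSet v := hτ.adj_apply v hv
    rw [hσ.neighborSet_eq hB hv] at hτv
    refine hτv.resolve_left fun h => hτu ?_
    exact hσ.apply_eq_of_sameCycle hB hτ hv h (mem_support_cycleOf_iff.mp hu).1
  · rw [reverseCycles_apply_of_notMem hmem]
    by_contra hne
    have hτv : τ v ∈ B.neighborSet v := hτ.adj_apply v hv
    rw [hσ.neighborSet_eq hB hv] at hτv
    refine hmem (Finset.mem_filter.mpr ⟨cycleOf_mem_cycleFactorsFinset_iff.mpr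
      (Perm.mem_support.mpr hmoved), ?_, v, ?_, hne⟩)
    · rw [two_lt_card_support_cycleOf_iff hmoved, ne_eq, ← apply_eq_inv_apply_iff]
      exact fun h => hne (hτv.resolve_left hne ▸ h.symm)
    · exact mem_support_cycleOf_iff.mpr ⟨.refl _ _, Perm.mem_support.mpr hmoved⟩

theorem ncard_isTraversal (hB : IsElementarySubgraph B) (hσ : B.IsTraversal σ) :
    {τ | B.IsTraversal τ}.ncard = 2 ^ numCycles B := by
  have himage : {τ | B.IsTraversal τ} =
      ({c ∈ σ.cycleFactorsFinset | 2 < #c.support}.powerset.image σ.reverseCycles : Set _) := by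
    ext τ
    simp only [Set.mem_ofPred_eq, coe_image, coe_powerset, Set.mem_image, Set.mem_preimage,
      Set.mem_powerset_iff, coe_subset]
    refine ⟨fun hτ => ⟨_, ?_, (hσ.eq_reverseCycles hB hτ).symm⟩, ?_⟩
    · intro c hc
      simp only [Finset.mem_filter] at hc ⊢
      exact ⟨hc.1, hc.2.1⟩
    · rintro ⟨s, -, rfl⟩
      exact hσ.reverseCycles s
  rw [himage, Set.ncard_coe_finset, card_image_of_injOn reverseCycles_injOn, card_powerset,
    hσ.numCycles_eq hB]

theorem subDeg_eq_one_iff (hB : IsElementarySubgraph B) (hσ : B.IsTraversal σ)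
    (hv : v ∈ B.verts) : subDeg B v = 1 ↔ σ (σ v) = v := by
  rw [hσ.subDeg_eq hB hv]
  split_ifs with h <;> simp [h]

theorem card_filter_sym2_eq (hB : IsElementarySubgraph B) (hσ : B.IsTraversal σ) {e : Sym2 V}
    (he : e ∈ B.edgeSet) :
    #{v ∈ σ.support | s(v, σ v) = e} = if ∀ x ∈ e, subDeg B x = 1 then 2 else 1 := by
  induction e using Sym2.ind with | h u v => ?_
  have huv : B.Adj u v := he
  have hu := B.edge_vert huv
  have hv := B.edge_vert huv.symm
  have hdir : σ u = v ∨ σ v = u := by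
    have : v ∈ B.neighborSet u := huv
    rw [hσ.neighborSet_eq hB hu] at this
    rcases this with h | h
    exacts [Or.inl h.symm, Or.inr (by rw [h]; exact σ.apply_symm_apply u)]
  have hiso : (∀ x ∈ s(u, v), subDeg B x = 1) ↔ σ u = v ∧ σ v = u := by
    rw [Sym2.forall_mem_pair, hσ.subDeg_eq_one_iff hB hu, hσ.subDeg_eq_one_iff hB hv]
    rcases hdir with rfl | rfl <;> simp [σ.injective.eq_iff]
  have hne : u ≠ v := huv.ne
  have hfilter : {x ∈ σ.support | s(x, σ x) = s(u, v)} =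
      (if σ u = v then {u} else ∅) ∪ (if σ v = u then {v} else ∅) := by
    ext x
    simp only [Finset.mem_filter, Perm.mem_support, Sym2.eq_iff, Finset.mem_union]
    split_ifs <;> simp <;> grind
  simp only [hiso, hfilter]
  split_ifs <;> simp_all

theorem prod_weight_eq (hB : IsElementarySubgraph B) (hσ : B.IsTraversal σ) {F : Type*} [Field F]
    (w : Sym2 V → F) :
    ∏ v ∈ σ.support, w s(v, σ v) = subgraphWeight w B * isolatedEdgesWeight w B := by
  have hfin := B.edgeSet.toFinite
  have hmaps : ∀ v ∈ σ.support, s(v, σ v) ∈ hfin.toFinset := fun v hv =>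
    hfin.mem_toFinset.mpr (hσ.adj_apply v (hσ.mem_verts_iff.mpr (Perm.mem_support.mp hv)))
  have hiso : {e ∈ B.edgeSet | ∀ x ∈ e, subDeg B x = 1} =
      ↑({e ∈ hfin.toFinset | ∀ x ∈ e, subDeg B x = 1}) := by
    ext; simp
  rw [← prod_fiberwise_of_maps_to hmaps, subgraphWeight, isolatedEdgesWeight, hiso,
    finprod_mem_eq_finite_toFinset_prod _ hfin, finprod_mem_coe_finset, prod_filter,
    ← prod_mul_distrib]
  refine prod_congr rfl fun e he => ?_
  rw [prod_congr rfl fun v hv => congrArg w (mem_filter.mp hv).2, prod_const,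
    hσ.card_filter_sym2_eq hB (hfin.mem_toFinset.mp he)]
  split_ifs <;> ring

theorem sign_mul_prod_neg_weight (hB : IsElementarySubgraph B) (hσ : B.IsTraversal σ)
    {F : Type*} [Field F] (w : Sym2 V → F) :
    ((sign σ : ℤ) : F) * ∏ v ∈ σ.support, -w s(v, σ v) =
      (-1) ^ numComponents B * (subgraphWeight w B * isolatedEdgesWeight w B) := by
  rw [prod_neg, hσ.prod_weight_eq hB, ← mul_assoc, hσ.numComponents_eq hB,
    sign_eq_neg_one_pow_card_support_add_card_cycleFactorsFinset]
  push_cast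
  rw [← pow_add, add_right_comm, ← two_mul, pow_add, pow_mul, neg_one_sq, one_pow, one_mul]

end Subgraph.IsTraversal

theorem Walk.IsCycle.exists_perm [Fintype V] [DecidableEq V] {H : SimpleGraph V} {u : V}
    {p : H.Walk u u} (hp : p.IsCycle) :
    ∃ f : Perm V, f.IsCycle ∧ 2 < #f.support ∧ (∀ x, x ∈ f.support ↔ x ∈ p.support) ∧
      ∀ x ∈ p.support, H.Adj x (f x) := by
  set l := p.support.tail with hl
  have hnd : l.Nodup := hp.support_nodup
  have hlen : l.length = p.length := by simp [hl]
  have h3 := hp.three_le_length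
  have hsupp : ∀ x, x ∈ p.support ↔ x ∈ l := fun x => by
    rw [← p.cons_tail_support, List.mem_cons, or_iff_right_iff_imp]
    rintro rfl
    exact end_mem_tail_support hp.not_nil
  have hsupport : l.formPerm.support = l.toFinset :=
    List.support_formPerm_of_nodup l hnd fun x hx => by simp [hx] at hlen; omega
  refine ⟨l.formPerm, List.isCycle_formPerm hnd (by omega), ?_, ?_, ?_⟩
  · rw [hsupport, List.toFinset_card_of_nodup hnd]
    omega
  · simp [hsupport, hsupp]
  · intro x hx
    obtain ⟨i, hi, rfl⟩ := List.getElem_of_mem ((hsupp x).mp hx)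
    have hvert (j : ℕ) (hj : j < l.length) : l[j] = p.getVert (j + 1) := by
      rw [List.getElem_tail, support_getElem_eq_getVert]
    rw [List.formPerm_apply_getElem l hnd i hi, hvert, hvert]
    rcases Nat.lt_or_ge (i + 1) l.length with hlt | hge
    · rw [Nat.mod_eq_of_lt hlt]
      exact p.adj_getVert_succ (by omega)
    · have hi' : i + 1 = p.length := by omega
      rw [hi', ← hlen, Nat.mod_self, hlen, getVert_length]
      simpa using p.adj_getVert_succ (i := 0) (by omega)

namespace Subgraph

variable {B : G.Subgraph} {S : Set V} {f σ : Perm V} {v : V}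

structure IsTraversalOn (B : G.Subgraph) (S : Set V) (f : Perm V) : Prop where
  subset_verts : S ⊆ B.verts
  neighborSet_subset : ∀ x ∈ S, B.neighborSet x ⊆ S
  apply_eq_self_of_notMem : ∀ x ∉ S, f x = x
  adj_apply : ∀ x ∈ S, Subgraph.Adj B x (f x)
  apply_apply_ne : ∀ x ∈ S, subDeg B x = 2 → f (f x) ≠ x

theorem neighborSet_deleteVerts_of_notMem (hS : ∀ x ∈ S, B.neighborSet x ⊆ S) {y : V}
    (hy : y ∉ S) : (B.deleteVerts S).neighborSet y = B.neighborSet y := by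
  ext t
  simp only [mem_neighborSet, deleteVerts_adj]
  refine ⟨fun h => h.2.2.2.2, fun h => ⟨B.edge_vert h, hy, B.edge_vert h.symm, ?_, h⟩⟩
  exact fun ht => hy (hS t ht h.symm)

theorem subDeg_deleteVerts_of_notMem (hS : ∀ x ∈ S, B.neighborSet x ⊆ S) {y : V} (hy : y ∉ S) :
    subDeg (B.deleteVerts S) y = subDeg B y := by
  rw [subDeg, subDeg, neighborSet_deleteVerts_of_notMem hS hy]

theorem isElementarySubgraph_deleteVerts (hB : IsElementarySubgraph B)
    (hS : ∀ x ∈ S, B.neighborSet x ⊆ S) : IsElementarySubgraph (B.deleteVerts S) := by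
  refine ⟨fun v hv => ?_, fun u v huv => ?_⟩
  · rw [deleteVerts_verts] at hv
    rw [subDeg_deleteVerts_of_notMem hS hv.2]
    exact hB.1 v hv.1
  · obtain ⟨-, hu, -, hv, huv⟩ := deleteVerts_adj.mp huv
    rw [subDeg_deleteVerts_of_notMem hS hu, subDeg_deleteVerts_of_notMem hS hv]
    exact hB.2 u v huv

theorem IsTraversalOn.mul (hf : B.IsTraversalOn S f) (hσ : (B.deleteVerts S).IsTraversal σ) :
    B.IsTraversal (f * σ) := by
  have hσS (x : V) (hx : x ∈ S) : σ x = x :=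
    hσ.apply_eq_self_of_notMem x fun h => (deleteVerts_verts ▸ h).2 hx
  have hσS' (x : V) (hx : x ∉ S) : σ x ∉ S := by
    by_cases hx' : x ∈ (B.deleteVerts S).verts
    · exact (deleteVerts_verts ▸ hσ.apply_mem_verts hx').2
    · rwa [hσ.apply_eq_self_of_notMem x hx']
  have hfσS (x : V) (hx : x ∈ S) : (f * σ) x = f x := by rw [Perm.mul_apply, hσS x hx]
  have hfσS' (x : V) (hx : x ∉ S) : (f * σ) x = σ x := by
    rw [Perm.mul_apply, hf.apply_eq_self_of_notMem _ (hσS' x hx)]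
  have hverts (x : V) (hx : x ∉ S) : x ∈ (B.deleteVerts S).verts ↔ x ∈ B.verts := by
    simp [hx]
  refine ⟨fun x hx => ?_, fun x hx => ?_, fun x hx hd => ?_⟩
  · have hxS : x ∉ S := fun h => hx (hf.subset_verts h)
    rw [hfσS' x hxS, hσ.apply_eq_self_of_notMem x (mt (hverts x hxS).mp hx)]
  · by_cases hxS : x ∈ S
    · rw [hfσS x hxS]
      exact hf.adj_apply x hxS
    · rw [hfσS' x hxS]
      exact (deleteVerts_adj.mp (hσ.adj_apply x ((hverts x hxS).mpr hx))).2.2.2.2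
  · by_cases hxS : x ∈ S
    · rw [hfσS x hxS, hfσS _ (hf.neighborSet_subset x hxS (hf.adj_apply x hxS))]
      exact hf.apply_apply_ne x hxS hd
    · rw [hfσS' x hxS, hfσS' _ (hσS' x hxS)]
      refine hσ.apply_apply_ne x ((hverts x hxS).mpr hx) ?_
      rwa [subDeg_deleteVerts_of_notMem hf.neighborSet_subset hxS]

variable [DecidableEq V]

theorem exists_isTraversalOn_of_subDeg_eq_one (hB : IsElementarySubgraph B) (hv : v ∈ B.verts)
    (hd : subDeg B v = 1) : ∃ S f, v ∈ S ∧ B.IsTraversalOn S f := by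
  obtain ⟨u, hNv⟩ := Set.ncard_eq_one.mp hd
  have hvu : B.Adj v u := by
    change u ∈ B.neighborSet v
    rw [hNv]
    rfl
  have hdu : subDeg B u = 1 := (hB.2 v u hvu).symm.trans hd
  have hNu : B.neighborSet u = {v} := by
    obtain ⟨x, hx⟩ := Set.ncard_eq_one.mp hdu
    have hvx : v ∈ B.neighborSet u := hvu.symm
    rw [hx] at hvx
    rw [hx, Set.mem_singleton_iff.mp hvx]
  refine ⟨{v, u}, swap v u, Or.inl rfl, ⟨?_, ?_, ?_, ?_, ?_⟩⟩
  · rintro x (rfl | rfl)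
    exacts [hv, B.edge_vert hvu.symm]
  · rintro x (rfl | rfl)
    · rw [hNv]
      exact Set.singleton_subset_iff.mpr (Or.inr rfl)
    · rw [hNu]
      exact Set.singleton_subset_iff.mpr (Or.inl rfl)
  · intro x hx
    exact swap_apply_of_ne_of_ne (fun h => hx (Or.inl h)) (fun h => hx (Or.inr h))
  · rintro x (rfl | rfl)
    · rw [swap_apply_left]
      exact hvu
    · rw [swap_apply_right]
      exact hvu.symm
  · rintro x (rfl | rfl) hd2 <;> omega

variable [Fintype V]

theorem exists_isTraversalOn_of_forall_subDeg_eq_two (hv : v ∈ B.verts)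
    (h2 : ∀ x ∈ B.verts, subDeg B x = 2) : ∃ S f, v ∈ S ∧ B.IsTraversalOn S f := by
  have hcyc : B.spanningCoe.IsCycles := fun x ⟨y, hy⟩ => h2 x (B.edge_vert hy)
  obtain ⟨w, hw⟩ : (B.spanningCoe.neighborSet v).Nonempty :=
    Set.nonempty_of_ncard_ne_zero (by
      rw [show (B.spanningCoe.neighborSet v).ncard = 2 from h2 v hv]
      omega)
  obtain ⟨u, p, hp, hvw⟩ :=
    adj_and_reachable_delete_edges_iff_exists_cycle.mp ⟨hw, hcyc.reachable_deleteEdges hw⟩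
  obtain ⟨f, hf, hf2, hfS, hfadj⟩ := hp.exists_perm
  have hadj (x : V) (hx : x ∈ f.support) : B.Adj x (f x) := hfadj x ((hfS x).mp hx)
  have hinv (x : V) (hx : x ∈ f.support) : f⁻¹ x ∈ f.support := by
    rwa [← support_inv, apply_mem_support, support_inv]
  have hadj_inv (x : V) (hx : x ∈ f.support) : B.Adj x (f⁻¹ x) := by
    simpa using (hadj (f⁻¹ x) (hinv x hx)).symm
  have hback (x : V) (hx : x ∈ f.support) : f (f x) ≠ x := by
    rw [← two_lt_card_support_cycleOf_iff (Perm.mem_support.mp hx),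
      hf.cycleOf_eq (Perm.mem_support.mp hx)]
    exact hf2
  refine ⟨f.support, f, (hfS v).mpr (p.fst_mem_support_of_mem_edges hvw), ⟨?_, ?_, ?_, ?_, ?_⟩⟩
  · exact fun x hx => B.edge_vert (hadj x hx)
  · intro x hx
    rw [neighborSet_eq_pair (Or.inr (h2 x (B.edge_vert (hadj x hx)))) (hadj x hx)
      (hadj_inv x hx) fun _ => (f.apply_eq_inv_apply_iff x).not.mpr (hback x hx)]
    rintro y (rfl | rfl)
    exacts [apply_mem_support.mpr hx, hinv x hx]
  · exact fun x hx => notMem_support.mp hx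
  · exact hadj
  · exact fun x hx _ => hback x hx

theorem exists_isTraversalOn (hB : IsElementarySubgraph B) (hne : B.verts.Nonempty) :
    ∃ S f, S.Nonempty ∧ B.IsTraversalOn S f := by
  by_cases h1 : ∃ v ∈ B.verts, subDeg B v = 1
  · obtain ⟨v, hv, hd⟩ := h1
    obtain ⟨S, f, hvS, hf⟩ := exists_isTraversalOn_of_subDeg_eq_one hB hv hd
    exact ⟨S, f, ⟨v, hvS⟩, hf⟩
  · push Not at h1
    obtain ⟨v, hv⟩ := hne
    obtain ⟨S, f, hvS, hf⟩ := exists_isTraversalOn_of_forall_subDeg_eq_two hv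
      fun x hx => (hB.1 x hx).resolve_left (h1 x hx)
    exact ⟨S, f, ⟨v, hvS⟩, hf⟩

theorem exists_isTraversal (hB : IsElementarySubgraph B) : ∃ σ, B.IsTraversal σ := by
  induction hn : B.verts.ncard using Nat.strong_induction_on generalizing B with | _ n ih => ?_
  obtain hempty | hne := B.verts.eq_empty_or_nonempty
  · exact ⟨1, fun _ _ => rfl, by simp [hempty], by simp [hempty]⟩
  obtain ⟨S, f, hS, hf⟩ := exists_isTraversalOn hB hne
  have hlt : (B.deleteVerts S).verts.ncard < n := by
    rw [← hn, deleteVerts_verts]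
    exact Set.ncard_lt_ncard (hf.subset_verts.sdiff_ssubset_of_nonempty hS) (Set.toFinite _)
  obtain ⟨σ, hσ⟩ := ih _ hlt (isElementarySubgraph_deleteVerts hB hf.neighborSet_subset) rfl
  exact ⟨f * σ, hf.mul hσ⟩

end Subgraph

def weightedAdjMatrix {F : Type*} [Field F] (G : SimpleGraph V) [DecidableRel G.Adj]
    (w : Sym2 V → F) : Matrix V V F :=
  Matrix.of fun u v => if G.Adj u v then w s(u, v) else 0

variable [Fintype V] [DecidableEq V] {F : Type*} [Field F]

theorem ncard_setOf_movesAlongEdges_permSubgraph_eq {B : G.Subgraph}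
    (hB : IsElementarySubgraph B) :
    {σ : Perm V | G.MovesAlongEdges σ ∧ G.permSubgraph σ = B}.ncard = 2 ^ numCycles B := by
  obtain ⟨σ, hσ⟩ := Subgraph.exists_isTraversal hB
  simp_rw [← isTraversal_iff_movesAlongEdges_and_permSubgraph_eq hB]
  exact hσ.ncard_isTraversal hB

variable [DecidableRel G.Adj]

theorem sign_mul_prod_neg_weightedAdjMatrix (w : Sym2 V → F) (σ : Perm V) :
    ((sign σ : ℤ) : F) * ∏ v ∈ σ.support, -G.weightedAdjMatrix w (σ v) v =
      if G.MovesAlongEdges σ then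
        (-1) ^ numComponents (G.permSubgraph σ) *
          (subgraphWeight w (G.permSubgraph σ) * isolatedEdgesWeight w (G.permSubgraph σ))
      else 0 := by
  split_ifs with h
  · rw [← h.isTraversal.sign_mul_prod_neg_weight h.isElementarySubgraph]
    refine congrArg _ (prod_congr rfl fun v hv => ?_)
    have hadj := h v (Perm.mem_support.mp hv)
    simp [weightedAdjMatrix, hadj.symm, Sym2.eq_swap]
  · obtain ⟨v, hv, hnadj⟩ : ∃ v, σ v ≠ v ∧ ¬G.Adj v (σ v) := by
      simpa [MovesAlongEdges] using h
    refine mul_eq_zero_of_right _ (prod_eq_zero (Perm.mem_support.mpr hv) ?_)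
    have hnadj' : ¬G.Adj (σ v) v := fun h => hnadj h.symm
    simp [weightedAdjMatrix, hnadj']

theorem sum_movesAlongEdges_eq_finsum {M : Type*} [AddCommMonoid M]
    (g : G.Subgraph → M) (m : ℕ) :
    ∑ σ : Perm V with #σ.support = m ∧ G.MovesAlongEdges σ, g (G.permSubgraph σ) =
      ∑ᶠ B ∈ {B : G.Subgraph | IsElementarySubgraph B ∧ B.verts.ncard = m},
        2 ^ numCycles B • g B := by
  classical
  have hfin := {B : G.Subgraph | IsElementarySubgraph B ∧ B.verts.ncard = m}.toFinite
  have hmaps : ∀ σ ∈ ({σ | #σ.support = m ∧ G.MovesAlongEdges σ} : Finset (Perm V)),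
      G.permSubgraph σ ∈ hfin.toFinset := by
    intro σ hσ
    obtain ⟨hm, h⟩ := (mem_filter.mp hσ).2
    exact hfin.mem_toFinset.mpr ⟨h.isElementarySubgraph, ncard_permSubgraph_verts.trans hm⟩
  rw [finsum_mem_eq_finite_toFinset_sum _ hfin, ← sum_fiberwise_of_maps_to hmaps]
  refine sum_congr rfl fun B hB => ?_
  obtain ⟨hBel, hBm⟩ := hfin.mem_toFinset.mp hB
  rw [sum_congr rfl fun σ hσ => congrArg g (mem_filter.mp hσ).2, sum_const,
    ← ncard_setOf_movesAlongEdges_permSubgraph_eq hBel]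
  rw [← Set.ncard_coe_finset]
  congr 2
  ext σ
  simp only [coe_filter, mem_filter, mem_univ, true_and, Set.mem_ofPred_eq]
  refine ⟨fun h => ⟨h.1.2, h.2⟩, fun h => ⟨⟨?_, h.1⟩, h.2⟩⟩
  rw [← ncard_permSubgraph_verts, h.2, hBm]

end SimpleGraph

theorem weighted_sachs_formula_general {V : Type*} [Fintype V] [DecidableEq V] {F : Type*}
    [Field F] (G : SimpleGraph V) [DecidableRel G.Adj] (w : Sym2 V → F)
    (k : ℕ) (hk : k ≤ Fintype.card V) :
    (Matrix.of fun u v => if G.Adj u v then w s(u, v) else 0).charpoly.coeff k =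
      ∑ᶠ B ∈ {B : G.Subgraph |
          IsElementarySubgraph B ∧ B.verts.ncard = Fintype.card V - k},
        (-1 : F) ^ numComponents B * 2 ^ numCycles B *
          subgraphWeight w B * isolatedEdgesWeight w B := by
  change (G.weightedAdjMatrix w).charpoly.coeff k = _
  rw [Matrix.charpoly_coeff_eq_sum_perm_of_diag_eq_zero _ (by simp [weightedAdjMatrix]) hk]
  simp_rw [sign_mul_prod_neg_weightedAdjMatrix, ← sum_filter, filter_filter]
  rw [sum_movesAlongEdges_eq_finsum
    fun B => (-1 : F) ^ numComponents B * (subgraphWeight w B * isolatedEdgesWeight w B)]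
  refine finsum_mem_congr rfl fun B _ => ?_
  rw [nsmul_eq_mul]
  push_cast
  ring

/-- weighted Sachs formula. Let `(G, w)` be a weighted graph on `n`
vertices with nowhere-zero edge weights in a field.  The coefficient of `λ^k` in the
characteristic polynomial `φ(G,w;λ) = det(λI - A(G,w))`, i.e. `a_{n-k}`, equals
`Σ_{B ∈ B_{n-k}(G)} (-1)^{κ(B)} · 2^{c(B)} · w(B) · w(B₂)`, the sum being over the
elementary subgraphs `B` of `G` of order `n - k`. -/
theorem weighted_sachs_formula {V : Type*} [Fintype V] [DecidableEq V] {F : Type*}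
    [Field F] (G : SimpleGraph V) [DecidableRel G.Adj] (w : Sym2 V → F)
    (hw : ∀ e ∈ G.edgeSet, w e ≠ 0) (k : ℕ) (hk : k ≤ Fintype.card V) :
    (Matrix.of fun u v => if G.Adj u v then w s(u, v) else 0).charpoly.coeff k =
      ∑ᶠ B ∈ {B : G.Subgraph |
          IsElementarySubgraph B ∧ B.verts.ncard = Fintype.card V - k},
        (-1 : F) ^ numComponents B * 2 ^ numCycles B *
          subgraphWeight w B * isolatedEdgesWeight w B :=
  weighted_sachs_formula_general G w k hk
end

section
/- A signed graph Σ = (G, σ) with connected underlying simple graph G is balanced if and only if the adjacency matrices A(Σ) and A(G) have the same spectrum (equal characteristic polynomials). -/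
open SimpleGraph

/-- The sign (product of edge signs) of a walk in a graph, computed along its darts. -/
def walkSign {V : Type*} {G : SimpleGraph V} (σ : V → V → ℤ) {u v : V} (p : G.Walk u v) : ℤ :=
  (p.darts.map fun d => σ d.toProd.1 d.toProd.2).prod

/-- `σ` is a signature on `G`: a symmetric function that is `±1`-valued on edges. -/
def IsSignature {V : Type*} (G : SimpleGraph V) (σ : V → V → ℤ) : Prop :=
  (∀ u v, σ u v = σ v u) ∧ ∀ u v, G.Adj u v → σ u v = 1 ∨ σ u v = -1

/-- A signed graph is balanced when every cycle has sign `+1`. -/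
def IsBalanced {V : Type*} (G : SimpleGraph V) (σ : V → V → ℤ) : Prop :=
  ∀ (u : V) (p : G.Walk u u), p.IsCycle → walkSign σ p = 1

/-- A walk is a shortest path when it is a path whose length is the graph distance
between its endpoints. -/
def IsShortestPath {V : Type*} {G : SimpleGraph V} {u v : V} (p : G.Walk u v) : Prop :=
  p.IsPath ∧ p.length = G.dist u v

open scoped Classical in
/-- `σmax u v = +1` if some shortest `u v`-path is positive, `-1` otherwise. -/
noncomputable def sigmaMax {V : Type*} (G : SimpleGraph V) (σ : V → V → ℤ) (u v : V) : ℤ :=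
  if ∃ p : G.Walk u v, IsShortestPath p ∧ walkSign σ p = 1 then 1 else -1

open scoped Classical in
/-- `σmin u v = +1` if all shortest `u v`-paths are positive, `-1` otherwise. -/
noncomputable def sigmaMin {V : Type*} (G : SimpleGraph V) (σ : V → V → ℤ) (u v : V) : ℤ :=
  if ∀ p : G.Walk u v, IsShortestPath p → walkSign σ p = 1 then 1 else -1

/-- The signed distance matrix `D^max`, with `(u,v)` entry `σmax(u,v)·d(u,v)`. -/
noncomputable def Dmax {V : Type*} (G : SimpleGraph V) (σ : V → V → ℤ) : Matrix V V ℝ :=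
  Matrix.of fun u v => (sigmaMax G σ u v : ℝ) * (G.dist u v : ℝ)

/-- The signed distance matrix `D^min`, with `(u,v)` entry `σmin(u,v)·d(u,v)`. -/
noncomputable def Dmin {V : Type*} (G : SimpleGraph V) (σ : V → V → ℤ) : Matrix V V ℝ :=
  Matrix.of fun u v => (sigmaMin G σ u v : ℝ) * (G.dist u v : ℝ)

/-- Two vertices are distance-compatible if all shortest paths between them have the
same sign. -/
def Compatible {V : Type*} (G : SimpleGraph V) (σ : V → V → ℤ) (u v : V) : Prop :=
  ∀ p q : G.Walk u v, IsShortestPath p → IsShortestPath q → walkSign σ p = walkSign σ q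

/-- A signed graph is distance-compatible if every pair of vertices is
distance-compatible. -/
def IsCompatibleGraph {V : Type*} (G : SimpleGraph V) (σ : V → V → ℤ) : Prop :=
  ∀ u v, Compatible G σ u v

/-- The largest eigenvalue of a (symmetric) real matrix: the supremum of the set of real
roots of its characteristic polynomial. -/
noncomputable def largestEigenvalue {n : Type*} [Fintype n] [DecidableEq n]
    (M : Matrix n n ℝ) : ℝ :=
  sSup {x : ℝ | M.charpoly.IsRoot x}

/-!
If `Σ` is balanced, every closed walk is positive: replacing a walk by its bypass only removes
closed pieces made of a path and one edge, which are cycles or back-and-forth steps. On a connected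
graph the sign of walks from a base vertex is then a switching function `θ` with
`σ(uv) = θ(u)θ(v)`, so `A(Σ) = D A(G) D` with `D = diag θ`, `D² = 1`, and the characteristic
polynomials agree. Conversely, both matrices are symmetric, so equal characteristic polynomials
force equal traces of all powers; but `tr A(Σ)^k` and `tr A(G)^k` are the signed and the plain
counts of closed walks of length `k`, and a negative cycle of length `k` makes the first smaller.
-/

section WalkSign

variable {V : Type*} {G : SimpleGraph V} {σ : V → V → ℤ}

lemma IsSignature.mul_self_eq_one (hσ : IsSignature G σ) {u v : V} (h : G.Adj u v) :
    σ u v * σ u v = 1 := by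
  rcases hσ.2 u v h with h1 | h1 <;> simp [h1]

lemma walkSign_cons {u v w : V} (h : G.Adj u v) (p : G.Walk v w) :
    walkSign σ (Walk.cons h p) = σ u v * walkSign σ p := by
  simp [walkSign]

lemma walkSign_append {u v w : V} (p : G.Walk u v) (q : G.Walk v w) :
    walkSign σ (p.append q) = walkSign σ p * walkSign σ q := by
  simp [walkSign, Walk.darts_append]

lemma walkSign_reverse (hσ : ∀ u v, σ u v = σ v u) {u v : V} (p : G.Walk u v) :
    walkSign σ p.reverse = walkSign σ p := by
  simp only [walkSign, Walk.darts_reverse, List.map_reverse, List.prod_reverse, List.map_map]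
  congr 1
  exact List.map_congr_left fun d _ => hσ _ _

lemma walkSign_mul_self (hσ : IsSignature G σ) {u v : V} (p : G.Walk u v) :
    walkSign σ p * walkSign σ p = 1 := by
  induction p with
  | nil => rfl
  | cons h q ih =>
    rw [walkSign_cons, mul_mul_mul_comm, hσ.mul_self_eq_one h, ih, one_mul]

lemma walkSign_eq_one_or_eq_neg_one (hσ : IsSignature G σ) {u v : V} (p : G.Walk u v) :
    walkSign σ p = 1 ∨ walkSign σ p = -1 :=
  Int.eq_one_or_neg_one_of_mul_eq_one (walkSign_mul_self hσ p)

lemma IsBalanced.walkSign_cons_of_isPath (hσ : IsSignature G σ) (hb : IsBalanced G σ)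
    {u v : V} (h : G.Adj u v) {t : G.Walk v u} (ht : t.IsPath) :
    walkSign σ (Walk.cons h t) = 1 := by
  -- a path closed up by one edge is a cycle, unless it runs back along that edge
  by_cases he : s(u, v) ∈ t.edges
  · cases t with
    | nil => exact absurd rfl h.ne
    | cons h' r =>
      rw [Walk.cons_isPath_iff] at ht
      rw [Walk.edges_cons, List.mem_cons] at he
      rcases he with he | he
      · obtain ⟨rfl, -⟩ | ⟨rfl, -⟩ := Sym2.eq_iff.mp he
        · exact absurd rfl h.ne
        · obtain rfl := (Walk.isPath_iff_nil.mp ht.1).eq_nil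
          rw [walkSign_cons, walkSign_cons, hσ.1 _ u, ← mul_assoc, hσ.mul_self_eq_one h]
          rfl
      · exact absurd (Walk.snd_mem_support_of_mem_edges r he) ht.2
  · exact hb u _ ((Walk.cons_isCycle_iff t h).mpr ⟨ht, he⟩)

lemma IsBalanced.walkSign_bypass [DecidableEq V] (hσ : IsSignature G σ) (hb : IsBalanced G σ) :
    ∀ {u v : V} (p : G.Walk u v), walkSign σ p.bypass = walkSign σ p
  | _, _, .nil => rfl
  | u, _, .cons h p => by
    have ih := hb.walkSign_bypass hσ p
    rw [Walk.bypass]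
    split_ifs with hs
    · have hloop := hb.walkSign_cons_of_isPath hσ h (p.bypass_isPath.takeUntil hs)
      calc walkSign σ (p.bypass.dropUntil u hs)
          = walkSign σ (Walk.cons h (p.bypass.takeUntil u hs)) *
              walkSign σ (p.bypass.dropUntil u hs) := by rw [hloop, one_mul]
        _ = walkSign σ (Walk.cons h p) := by
          rw [walkSign_cons, walkSign_cons, mul_assoc, ← walkSign_append, Walk.take_spec, ih]
    · rw [walkSign_cons, walkSign_cons, ih]

lemma IsBalanced.walkSign_eq_one_of_closed [DecidableEq V] (hσ : IsSignature G σ)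
    (hb : IsBalanced G σ) {u : V} (p : G.Walk u u) : walkSign σ p = 1 := by
  rw [← hb.walkSign_bypass hσ p, (Walk.isPath_iff_nil.mp p.bypass_isPath).eq_nil]
  rfl

/-- `θ v` is the sign of any walk from a fixed base vertex to `v`. -/
lemma IsBalanced.exists_switching [DecidableEq V] (hσ : IsSignature G σ)
    (hb : IsBalanced G σ) (hG : G.Connected) :
    ∃ θ : V → ℤ, (∀ v, θ v * θ v = 1) ∧
      ∀ u v, G.Adj u v → σ u v = θ u * θ v := by
  obtain ⟨r⟩ := hG.nonempty
  let θ v := walkSign σ (hG.preconnected r v).some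
  have hθ v : θ v * θ v = 1 := walkSign_mul_self hσ _
  refine ⟨θ, hθ, fun u v h => ?_⟩
  have hloop : θ u * (σ u v * θ v) = 1 := by
    have := hb.walkSign_eq_one_of_closed hσ
      ((hG.preconnected r u).some.append (.cons h (hG.preconnected r v).some.reverse))
    rwa [walkSign_append, walkSign_cons, walkSign_reverse hσ.1] at this
  linear_combination θ u * θ v * hloop - σ u v * θ u * θ u * hθ v - σ u v * hθ u

end WalkSign

def signedAdjMatrix {V : Type*} (R : Type*) [Ring R] (G : SimpleGraph V) [DecidableRel G.Adj]
    (σ : V → V → ℤ) : Matrix V V R :=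
  Matrix.of fun u v => if G.Adj u v then (σ u v : R) else 0

lemma isHermitian_signedAdjMatrix {V : Type*} {G : SimpleGraph V} [DecidableRel G.Adj]
    {σ : V → V → ℤ} (hσ : ∀ u v, σ u v = σ v u) :
    (signedAdjMatrix ℝ G σ).IsHermitian := by
  ext u v
  simp [signedAdjMatrix, G.adj_comm, hσ u v]

section SignedAdjMatrix

variable {V : Type*} [Fintype V] [DecidableEq V] {G : SimpleGraph V} [DecidableRel G.Adj]
  {σ : V → V → ℤ}

lemma signedAdjMatrix_eq_diagonal_mul_adjMatrix_mul_diagonal (R : Type*) [CommRing R]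
    {θ : V → ℤ} (hθ : ∀ u v, G.Adj u v → σ u v = θ u * θ v) :
    signedAdjMatrix R G σ =
      Matrix.diagonal (θ · : V → R) * G.adjMatrix R * Matrix.diagonal (θ · : V → R) := by
  ext u v
  rw [Matrix.mul_diagonal, Matrix.diagonal_mul]
  by_cases h : G.Adj u v
  · simp [signedAdjMatrix, h, hθ u v h]
  · simp [signedAdjMatrix, h]

lemma charpoly_signedAdjMatrix_of_switching (R : Type*) [CommRing R] {θ : V → ℤ}
    (hθ₁ : ∀ v, θ v * θ v = 1) (hθ : ∀ u v, G.Adj u v → σ u v = θ u * θ v) :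
    (signedAdjMatrix R G σ).charpoly = (G.adjMatrix R).charpoly := by
  have hD : Matrix.diagonal (θ · : V → R) * Matrix.diagonal (θ · : V → R) = 1 := by
    simp only [Matrix.diagonal_mul_diagonal, ← Int.cast_mul, hθ₁, Int.cast_one,
      Matrix.diagonal_one]
  rw [signedAdjMatrix_eq_diagonal_mul_adjMatrix_mul_diagonal R hθ, mul_assoc,
    Matrix.charpoly_mul_comm, mul_assoc, hD, mul_one]

lemma signedAdjMatrix_pow_apply (R : Type*) [Ring R] (n : ℕ) (u v : V) :
    (signedAdjMatrix R G σ ^ n) u v = ∑ p ∈ G.finsetWalkLength n u v, (walkSign σ p : R) := by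
  induction n generalizing u v with
  | zero => obtain rfl | h := eq_or_ne u v <;> simp [finsetWalkLength, walkSign, *]
  | succ n ih =>
    rw [pow_succ', Matrix.mul_apply, finsetWalkLength, Finset.sum_biUnion]
    · rw [← Finset.sum_subset (Finset.subset_univ (G.neighborFinset u)) fun j _ hj => by
        simp [signedAdjMatrix, by simpa using hj]]
      rw [Finset.sum_subtype (G.neighborFinset u) (p := (· ∈ G.neighborSet u))
        fun _ => mem_neighborFinset ..]
      refine Fintype.sum_congr _ _ fun ⟨w, hw⟩ => ?_
      rw [show signedAdjMatrix R G σ u w = σ u w from if_pos hw, ih, Finset.mul_sum,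
        Finset.sum_map]
      exact Finset.sum_congr rfl fun p _ => by
        rw [← Int.cast_mul, ← walkSign_cons hw]
        rfl
    · rintro ⟨x, hx⟩ - ⟨y, hy⟩ - hxy
      simp only [Function.onFun, Finset.disjoint_left, Finset.mem_map]
      rintro _ ⟨p, -, rfl⟩ ⟨q, -, hq⟩
      cases hq
      exact hxy rfl

lemma trace_signedAdjMatrix_pow (R : Type*) [Ring R] (n : ℕ) :
    (signedAdjMatrix R G σ ^ n).trace =
      ∑ v, ∑ p ∈ G.finsetWalkLength n v v, (walkSign σ p : R) := by
  simp only [Matrix.trace, Matrix.diag_apply, signedAdjMatrix_pow_apply]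

lemma trace_adjMatrix_pow (R : Type*) [Semiring R] (n : ℕ) :
    (G.adjMatrix R ^ n).trace = ∑ v, ∑ _p ∈ G.finsetWalkLength n v v, (1 : R) := by
  simp [Matrix.trace, adjMatrix_pow_apply_eq_card_walk]

lemma trace_signedAdjMatrix_pow_lt (hσ : IsSignature G σ) {u : V} (c : G.Walk u u)
    (hc : walkSign σ c ≠ 1) :
    (signedAdjMatrix ℝ G σ ^ c.length).trace < (G.adjMatrix ℝ ^ c.length).trace := by
  have hle {v w : V} (p : G.Walk v w) : (walkSign σ p : ℝ) ≤ 1 := by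
    rcases walkSign_eq_one_or_eq_neg_one hσ p with h | h <;> simp [h]
  rw [trace_signedAdjMatrix_pow, trace_adjMatrix_pow]
  refine Finset.sum_lt_sum (fun v _ => Finset.sum_le_sum fun p _ => hle p)
    ⟨u, Finset.mem_univ u, ?_⟩
  refine Finset.sum_lt_sum (fun p _ => hle p) ⟨c, mem_finsetWalkLength_iff.mpr rfl, ?_⟩
  simp [(walkSign_eq_one_or_eq_neg_one hσ c).resolve_left hc]

end SignedAdjMatrix

namespace Matrix.IsHermitian

open Polynomial

variable {𝕜 n : Type*} [RCLike 𝕜] [Fintype n] [DecidableEq n] {A B : Matrix n n 𝕜}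

lemma charpoly_pow (hA : A.IsHermitian) (k : ℕ) :
    (A ^ k).charpoly = ∏ i, (X - C ((hA.eigenvalues i : 𝕜) ^ k)) := by
  rw [← cfc_pow_id (R := ℝ) A k hA.isSelfAdjoint, hA.charpoly_cfc_eq]
  simp

lemma trace_pow_eq_of_charpoly_eq (hA : A.IsHermitian) (hB : B.IsHermitian)
    (h : A.charpoly = B.charpoly) (k : ℕ) : (A ^ k).trace = (B ^ k).trace := by
  rw [trace_eq_neg_charpoly_nextCoeff, trace_eq_neg_charpoly_nextCoeff, hA.charpoly_pow,
    hB.charpoly_pow, (hA.eigenvalues_eq_eigenvalues_iff hB).mpr h]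

end Matrix.IsHermitian

/-- Acharya's spectral criterion. A signed graph `(G, σ)` with connected
underlying simple graph is balanced if and only if the adjacency matrices `A(Σ)` and
`A(G)` have the same spectrum (equal characteristic polynomials). -/
theorem balanced_iff_cospectral {V : Type*} [Fintype V] [DecidableEq V]
    (G : SimpleGraph V) [DecidableRel G.Adj] (σ : V → V → ℤ)
    (hσ : IsSignature G σ) (hG : G.Connected) :
    IsBalanced G σ ↔
      (Matrix.of fun u v => if G.Adj u v then (σ u v : ℝ) else 0).charpoly =
        (G.adjMatrix ℝ).charpoly := by
  change IsBalanced G σ ↔ (signedAdjMatrix ℝ G σ).charpoly = (G.adjMatrix ℝ).charpoly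
  constructor
  · intro hb
    obtain ⟨θ, hθ₁, hθ⟩ := hb.exists_switching hσ hG
    exact charpoly_signedAdjMatrix_of_switching ℝ hθ₁ hθ
  · intro h u c _
    by_contra hsign
    exact (trace_signedAdjMatrix_pow_lt hσ c hsign).ne <|
      (isHermitian_signedAdjMatrix hσ.1).trace_pow_eq_of_charpoly_eq
        (G.isHermitian_adjMatrix ℝ) h _
end

section
/- Let Σ = (G, σ) be a signed graph with connected underlying simple graph G such that D^max(Σ) = D^min(Σ) = D^±(Σ), and let Σ^ζ be a switching of Σ by ζ : V → {+1, −1}. Then D^max(Σ^ζ) = D^min(Σ^ζ) = D^±(Σ^ζ), and D^±(Σ^ζ) = S·D^±(Σ)·S^{−1} where S = diag(ζ(v₁), …, ζ(v_n)) (note S = S^{−1}); in particular D^±(Σ) and D^±(Σ^ζ) are similar and hence cospectral. -/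
open SimpleGraph

section Aux

lemma walkSign_pm {V : Type*} {G : SimpleGraph V} {σ : V → V → ℤ}
    (hσ : IsSignature G σ) {u v : V} (p : G.Walk u v) :
    walkSign σ p = 1 ∨ walkSign σ p = -1 := by
  induction p with
  | nil => left; rfl
  | @cons a b c h p ih =>
    have h1 := hσ.2 _ _ h
    have : walkSign σ (SimpleGraph.Walk.cons h p) = σ a b * walkSign σ p := by
      simp [walkSign]
    rw [this]
    rcases h1 with h1 | h1 <;> rcases ih with h2 | h2 <;> simp [h1, h2]

lemma walkSign_switch {V : Type*} {G : SimpleGraph V} (σ : V → V → ℤ) (ζ : V → ℤ)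
    (hζ : ∀ x, ζ x = 1 ∨ ζ x = -1) {u v : V} (p : G.Walk u v) :
    walkSign (fun x y => ζ x * σ x y * ζ y) p = ζ u * walkSign σ p * ζ v := by
  have hsq : ∀ x, ζ x * ζ x = 1 := by
    intro x; rcases hζ x with h | h <;> simp [h]
  induction p with
  | nil => simp [walkSign, hsq]
  | @cons a b c h p ih =>
    have e1 : walkSign (fun x y => ζ x * σ x y * ζ y) (SimpleGraph.Walk.cons h p) =
        (ζ a * σ a b * ζ b) * walkSign (fun x y => ζ x * σ x y * ζ y) p := by
      simp [walkSign]
    have e2 : walkSign σ (SimpleGraph.Walk.cons h p) = σ a b * walkSign σ p := by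
      simp [walkSign]
    rw [e1, e2, ih]
    linear_combination (ζ a * σ a b * walkSign σ p * ζ c) * hsq b

lemma exists_shortestPath {V : Type*} [DecidableEq V] {G : SimpleGraph V} (hG : G.Connected) (u v : V) :
    ∃ p : G.Walk u v, IsShortestPath p := by
  obtain ⟨p, hp⟩ := hG.exists_walk_length_eq_dist u v
  refine ⟨p.bypass, p.bypass_isPath, le_antisymm ?_ ?_⟩
  · calc p.bypass.length ≤ p.length := SimpleGraph.Walk.length_bypass_le p
      _ = G.dist u v := hp
  · exact SimpleGraph.dist_le _


lemma sigma_switch_eq {V : Type*} [DecidableEq V] {G : SimpleGraph V} {σ : V → V → ℤ}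
    {ζ : V → ℤ} (hσ : IsSignature G σ) (hζ : ∀ x, ζ x = 1 ∨ ζ x = -1) (hG : G.Connected)
    (u v : V) (hc : sigmaMax G σ u v = sigmaMin G σ u v) :
    sigmaMax G (fun x y => ζ x * σ x y * ζ y) u v = ζ u * ζ v * sigmaMax G σ u v ∧
    sigmaMin G (fun x y => ζ x * σ x y * ζ y) u v = ζ u * ζ v * sigmaMax G σ u v := by
  classical
  set σ' := fun x y => ζ x * σ x y * ζ y with hσ'
  set ε := ζ u * ζ v with hε
  have hεpm : ε = 1 ∨ ε = -1 := by
    rcases hζ u with h1 | h1 <;> rcases hζ v with h2 | h2 <;> simp [hε, h1, h2]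
  have hsw : ∀ p : G.Walk u v, walkSign σ' p = ε * walkSign σ p := by
    intro p
    rw [hσ', walkSign_switch σ ζ hζ p]
    ring
  obtain ⟨p₀, hp₀⟩ := exists_shortestPath hG u v
  -- A ↔ B from hc
  have hAB : (∃ p : G.Walk u v, IsShortestPath p ∧ walkSign σ p = 1) ↔
      (∀ p : G.Walk u v, IsShortestPath p → walkSign σ p = 1) := by
    constructor
    · intro hA
      by_contra hB
      simp only [sigmaMax, sigmaMin, if_pos hA, if_neg hB] at hc
      exact absurd hc (by norm_num)
    · intro hB
      exact ⟨p₀, hp₀, hB p₀ hp₀⟩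
  rcases hεpm with hε1 | hε1
  · -- ε = 1 : signs unchanged
    have hsgn : ∀ p : G.Walk u v, walkSign σ' p = walkSign σ p := by
      intro p; rw [hsw p, hε1, one_mul]
    have hmax : sigmaMax G σ' u v = sigmaMax G σ u v := by
      simp only [sigmaMax]
      apply if_congr (exists_congr fun p => and_congr_right fun _ => by rw [hsgn p]) rfl rfl
    have hmin : sigmaMin G σ' u v = sigmaMin G σ u v := by
      simp only [sigmaMin]
      apply if_congr (forall_congr' fun p => imp_congr_right fun _ => by rw [hsgn p]) rfl rfl
    rw [hmax, hmin, hε1, one_mul, ← hc]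
    exact ⟨rfl, rfl⟩
  · -- ε = -1 : signs flipped
    have hsgn : ∀ p : G.Walk u v, IsShortestPath p →
        (walkSign σ' p = 1 ↔ walkSign σ p = -1) := by
      intro p _
      rw [hsw p, hε1]
      constructor
      · intro h; linarith
      · intro h; rw [h]; ring
    by_cases hA : ∃ p : G.Walk u v, IsShortestPath p ∧ walkSign σ p = 1
    · have hB := hAB.mp hA
      have h1 : ¬ ∃ p : G.Walk u v, IsShortestPath p ∧ walkSign σ' p = 1 := by
        rintro ⟨p, hp, hs⟩
        have := hB p hp
        rw [(hsgn p hp).mp hs] at this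
        norm_num at this
      have h2 : ¬ ∀ p : G.Walk u v, IsShortestPath p → walkSign σ' p = 1 := by
        intro h
        have := (hsgn p₀ hp₀).mp (h p₀ hp₀)
        rw [hB p₀ hp₀] at this
        norm_num at this
      simp only [sigmaMax, sigmaMin, if_pos hA, if_neg h1, if_neg h2, hε1]
      norm_num
    · have hall : ∀ p : G.Walk u v, IsShortestPath p → walkSign σ p = -1 := by
        intro p hp
        rcases walkSign_pm hσ p with h | h
        · exact absurd ⟨p, hp, h⟩ hA
        · exact h
      have h1 : ∃ p : G.Walk u v, IsShortestPath p ∧ walkSign σ' p = 1 :=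
        ⟨p₀, hp₀, (hsgn p₀ hp₀).mpr (hall p₀ hp₀)⟩
      have h2 : ∀ p : G.Walk u v, IsShortestPath p → walkSign σ' p = 1 :=
        fun p hp => (hsgn p hp).mpr (hall p hp)
      simp only [sigmaMax, sigmaMin, if_neg hA, if_pos h1, if_pos h2, hε1]
      norm_num

end Aux

/-- If `D^max(Σ) = D^min(Σ) = D^±(Σ)` and `Σ^ζ` is obtained from `Σ` by
switching with `ζ : V → {±1}`, then `D^max(Σ^ζ) = D^min(Σ^ζ) = D^±(Σ^ζ)`, and
`D^±(Σ^ζ) = S · D^±(Σ) · S⁻¹` where `S = diag(ζ(v₁), …, ζ(v_n))` satisfies `S = S⁻¹`;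
in particular `D^±(Σ)` and `D^±(Σ^ζ)` are similar and hence cospectral. -/
theorem Dpm_switch_similar {V : Type*} [Fintype V] [DecidableEq V]
    (G : SimpleGraph V) (σ : V → V → ℤ) (ζ : V → ℤ)
    (hσ : IsSignature G σ) (hG : G.Connected) (hζ : ∀ x, ζ x = 1 ∨ ζ x = -1)
    (hD : Dmax G σ = Dmin G σ) :
    Dmax G (fun x y => ζ x * σ x y * ζ y) = Dmin G (fun x y => ζ x * σ x y * ζ y) ∧
    (Matrix.diagonal fun x => (ζ x : ℝ)) = (Matrix.diagonal fun x => (ζ x : ℝ))⁻¹ ∧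
    Dmax G (fun x y => ζ x * σ x y * ζ y) =
      (Matrix.diagonal fun x => (ζ x : ℝ)) * Dmax G σ *
        (Matrix.diagonal fun x => (ζ x : ℝ))⁻¹ ∧
    (Dmax G (fun x y => ζ x * σ x y * ζ y)).charpoly = (Dmax G σ).charpoly := by
  classical
  set σ' := fun x y => ζ x * σ x y * ζ y with hσ'
  have hsqR : ∀ x, (ζ x : ℝ) * (ζ x : ℝ) = 1 := by
    intro x; rcases hζ x with h | h <;> simp [h]
  -- pointwise compatibility from hD
  have hc : ∀ u v, sigmaMax G σ u v * (G.dist u v : ℤ) = sigmaMin G σ u v * (G.dist u v : ℤ) := by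
    intro u v
    have := congrFun (congrFun hD u) v
    simp only [Dmax, Dmin, Matrix.of_apply] at this
    exact_mod_cast this
  have key : ∀ u v,
      (sigmaMax G σ' u v : ℤ) * (G.dist u v : ℤ) = ζ u * ζ v * sigmaMax G σ u v * G.dist u v ∧
      (sigmaMin G σ' u v : ℤ) * (G.dist u v : ℤ) = ζ u * ζ v * sigmaMax G σ u v * G.dist u v := by
    intro u v
    by_cases hd : G.dist u v = 0
    · simp [hd]
    · have hcc : sigmaMax G σ u v = sigmaMin G σ u v :=
        mul_right_cancel₀ (by exact_mod_cast hd) (hc u v)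
      obtain ⟨h1, h2⟩ := sigma_switch_eq hσ hζ hG u v hcc
      exact ⟨by rw [h1], by rw [h2]⟩
  -- the matrix S
  set S : Matrix V V ℝ := Matrix.diagonal fun x => (ζ x : ℝ) with hS
  have hS2 : S * S = 1 := by
    rw [hS, Matrix.diagonal_mul_diagonal]
    rw [show (fun i => (ζ i : ℝ) * (ζ i : ℝ)) = fun _ => (1 : ℝ) from funext fun i => hsqR i]
    exact Matrix.diagonal_one
  have hSinv' : S⁻¹ = S := Matrix.inv_eq_right_inv hS2
  -- Dmax σ' = Dmin σ'
  have hDD : Dmax G σ' = Dmin G σ' := by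
    ext u v
    simp only [Dmax, Dmin, Matrix.of_apply]
    have h1 := (key u v).1
    have h2 := (key u v).2
    have : (sigmaMax G σ' u v : ℤ) * (G.dist u v : ℤ) =
        (sigmaMin G σ' u v : ℤ) * (G.dist u v : ℤ) := h1.trans h2.symm
    exact_mod_cast this
  -- conjugation
  have hconj : Dmax G σ' = S * Dmax G σ * S⁻¹ := by
    rw [hSinv']
    ext u v
    have hent : (S * Dmax G σ * S) u v = (ζ u : ℝ) * (Dmax G σ u v) * (ζ v : ℝ) := by
      rw [hS, Matrix.mul_diagonal, Matrix.diagonal_mul]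
    rw [hent]
    simp only [Dmax, Matrix.of_apply]
    have hkR : (sigmaMax G σ' u v : ℝ) * (G.dist u v : ℝ) =
        (ζ u : ℝ) * (ζ v : ℝ) * (sigmaMax G σ u v : ℝ) * (G.dist u v : ℝ) := by
      exact_mod_cast (key u v).1
    linear_combination hkR
  refine ⟨hDD, hSinv'.symm, hconj, ?_⟩
  -- charpoly
  rw [hconj, hSinv']
  set M := Dmax G σ
  set Cm : Matrix V V ℝ →+* Matrix V V (Polynomial ℝ) :=
    (Polynomial.C : ℝ →+* Polynomial ℝ).mapMatrix with hCm
  have hCmSS : Cm S * Cm S = 1 := by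
    rw [← map_mul, hS2, map_one]
  have hcm : (S * M * S).charmatrix = Cm S * M.charmatrix * Cm S := by
    show Matrix.scalar V (Polynomial.X : Polynomial ℝ) - Cm (S * M * S) =
      Cm S * (Matrix.scalar V (Polynomial.X : Polynomial ℝ) - Cm M) * Cm S
    rw [map_mul, map_mul, mul_sub, sub_mul]
    congr 1
    have hcomm : Commute (Matrix.scalar V (Polynomial.X : Polynomial ℝ)) (Cm S) :=
      Matrix.scalar_commute _ (fun r => Commute.all _ _) _
    rw [← hcomm.eq, mul_assoc, hCmSS, mul_one]
  rw [Matrix.charpoly, Matrix.charpoly, hcm, Matrix.det_mul, Matrix.det_mul,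
    mul_right_comm, ← Matrix.det_mul, hCmSS]
  simp
end
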